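/- Let λ > 0 and x > 0. Then the limit as ε → ∞ of ∑_{k=1}^∞ e^{−kx} · (e^{−λ}/(1 − e^{−λ})) · ( e^{λ e^{−x}} · Γ(εk, λ e^{−x}) / Γ(εk) − 1 ) · e^{−λ} λ^{k−1}/(k−1)! equals (e^{−2λ}/(1 − e^{−λ})) · e^{λ e^{−x} − x} · ( e^{λ e^{−x}} − 1 ). -/

import Mathlib

open MeasureTheory ProbabilityTheory Real Filter

/-- Modified Bessel function of the first kind of order 0, via its power series. -/
noncomputable def besselI0 (z : ℝ) : ℝ :=
  ∑' k : ℕ, (z / 2) ^ (2 * k) / ((Nat.factorial k : ℝ)) ^ 2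

/-- Modified Bessel function of the first kind of order 1, via its power series. -/
noncomputable def besselI1 (z : ℝ) : ℝ :=
  (z / 2) * ∑' k : ℕ, (z / 2) ^ (2 * k) / ((Nat.factorial k : ℝ) * (Nat.factorial (k + 1) : ℝ))

/-- Probability mass function of the zero-truncated Poisson distribution ZTP(λ). -/
noncomputable def ztpPmf (lam : ℝ) (k : ℕ) : ℝ :=
  if k = 0 then 0
  else Real.exp (-lam) * lam ^ k / ((1 - Real.exp (-lam)) * (Nat.factorial k : ℝ))

/-- Probability mass function of the size-biased distribution associated with ZTP(λ). -/
noncomputable def sizeBiasedPmf (lam : ℝ) (k : ℕ) : ℝ :=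
  if k = 0 then 0
  else Real.exp (-lam) * lam ^ (k - 1) / (Nat.factorial (k - 1) : ℝ)

/-- Laplace transform of the ZTP(λ) distribution. -/
noncomputable def ztpLaplace (lam x : ℝ) : ℝ :=
  (Real.exp (-lam) / (1 - Real.exp (-lam))) * (Real.exp (lam * Real.exp (-x)) - 1)

/-- Upper incomplete gamma function Γ(s, a) = ∫_a^∞ t^{s−1} e^{−t} dt. -/
noncomputable def upperGamma (s a : ℝ) : ℝ :=
  ∫ t in Set.Ioi a, t ^ (s - 1) * Real.exp (-t)

/-!
With `a = λe^{−x}`, write `Γ(s) = γ(s, a) + Γ(s, a)`. For `s ≥ 1` the lower part satisfies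
`γ(s, a) ≤ a^s`, while `Γ(s) ≥ (2a)^{s−1} e^{−2a}`, so `γ(s, a)/Γ(s) = O(2^{−s})` and
`Γ(s, a)/Γ(s) → 1`. Since this ratio lies in `[0, 1]`, the `k`-th summand is dominated by a
multiple of `a^k/k!`, and dominated convergence for series replaces the ratio by `1`; the
remaining exponential series sums to `e^a`.
-/

open Set
open scoped Topology Nat

noncomputable def lowerGamma (s a : ℝ) : ℝ :=
  ∫ t in Ioc 0 a, t ^ (s - 1) * exp (-t)

lemma integrableOn_rpow_sub_one_mul_exp_neg {s : ℝ} (hs : 0 < s) {S : Set ℝ} (hS : S ⊆ Ioi 0) :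
    IntegrableOn (fun t : ℝ => t ^ (s - 1) * exp (-t)) S :=
  ((GammaIntegral_convergent hs).congr_fun (fun _ _ => mul_comm _ _) measurableSet_Ioi).mono_set hS

lemma lowerGamma_add_upperGamma {s a : ℝ} (hs : 0 < s) (ha : 0 ≤ a) :
    lowerGamma s a + upperGamma s a = Gamma s := by
  rw [lowerGamma, upperGamma, ← setIntegral_union (Ioc_disjoint_Ioi le_rfl) measurableSet_Ioi
    (integrableOn_rpow_sub_one_mul_exp_neg hs Ioc_subset_Ioi_self)
    (integrableOn_rpow_sub_one_mul_exp_neg hs (Ioi_subset_Ioi ha)),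
    Ioc_union_Ioi_eq_Ioi ha, Gamma_eq_integral hs]
  exact setIntegral_congr_fun measurableSet_Ioi fun _ _ => mul_comm _ _

lemma lowerGamma_nonneg (s a : ℝ) : 0 ≤ lowerGamma s a :=
  setIntegral_nonneg measurableSet_Ioc fun t ht => by have : 0 < t := ht.1; positivity

lemma upperGamma_nonneg (s : ℝ) {a : ℝ} (ha : 0 ≤ a) : 0 ≤ upperGamma s a :=
  setIntegral_nonneg measurableSet_Ioi fun t ht => by
    have : 0 < t := ha.trans_lt ht; positivity

lemma upperGamma_le_Gamma {s a : ℝ} (hs : 0 < s) (ha : 0 ≤ a) : upperGamma s a ≤ Gamma s := by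
  linarith [lowerGamma_add_upperGamma hs ha, lowerGamma_nonneg s a]

lemma lowerGamma_le_rpow {s a : ℝ} (hs : 1 ≤ s) (ha : 0 < a) : lowerGamma s a ≤ a ^ s := by
  calc lowerGamma s a ≤ ∫ _ in Ioc 0 a, a ^ (s - 1) := by
        refine setIntegral_mono_on
          (integrableOn_rpow_sub_one_mul_exp_neg (by linarith) Ioc_subset_Ioi_self)
          (integrableOn_const (by simp [Real.volume_Ioc]) (by simp)) measurableSet_Ioc
          fun t ht => ?_
        calc t ^ (s - 1) * exp (-t) ≤ t ^ (s - 1) * 1 := by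
              gcongr
              · exact rpow_nonneg ht.1.le _
              · exact exp_le_one_iff.2 (by linarith [ht.1])
          _ ≤ a ^ (s - 1) := by rw [mul_one]; exact rpow_le_rpow ht.1.le ht.2 (by linarith)
    _ = a ^ s := by
        rw [setIntegral_const, Real.volume_real_Ioc_of_le ha.le, smul_eq_mul, sub_zero, mul_comm,
          ← rpow_add_one ha.ne', sub_add_cancel]

lemma rpow_sub_one_mul_exp_neg_le_Gamma {s c : ℝ} (hs : 1 ≤ s) (hc : 0 ≤ c) :
    c ^ (s - 1) * exp (-c) ≤ Gamma s := by
  calc c ^ (s - 1) * exp (-c) = ∫ t in Ioi c, c ^ (s - 1) * exp (-t) := by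
        rw [integral_const_mul, integral_exp_neg_Ioi]
    _ ≤ upperGamma s c := by
        have hexp : IntegrableOn (fun t => exp (-t)) (Ioi c) := by
          simpa using exp_neg_integrableOn_Ioi c one_pos
        refine setIntegral_mono_on (hexp.const_mul _)
          (integrableOn_rpow_sub_one_mul_exp_neg (by linarith) (Ioi_subset_Ioi hc))
          measurableSet_Ioi fun t ht => ?_
        gcongr
        exact le_of_lt ht
    _ ≤ Gamma s := upperGamma_le_Gamma (by linarith) hc

lemma tendsto_rpow_div_Gamma_atTop {a : ℝ} (ha : 0 < a) :
    Tendsto (fun s => a ^ s / Gamma s) atTop (𝓝 0) := by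
  have hgeom : Tendsto (fun s : ℝ => a * exp (2 * a) * (1 / 2 : ℝ) ^ (s - 1)) atTop (𝓝 0) := by
    simpa [sub_eq_add_neg] using
      ((tendsto_rpow_atTop_of_base_lt_one (1 / 2) (by norm_num) (by norm_num)).comp
        (tendsto_atTop_add_const_right _ (-1) tendsto_id)).const_mul (a * exp (2 * a))
  refine squeeze_zero' ?_ ?_ hgeom
  · filter_upwards [eventually_gt_atTop 0] with s hs
    have := Gamma_pos_of_pos hs
    positivity
  · filter_upwards [eventually_ge_atTop 1] with s hs
    rw [div_le_iff₀ (Gamma_pos_of_pos (by linarith))]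
    calc a ^ s
        = a * exp (2 * a) * (1 / 2 : ℝ) ^ (s - 1) * ((2 * a) ^ (s - 1) * exp (-(2 * a))) := by
          have hpow : (1 / 2 : ℝ) ^ (s - 1) * (2 * a) ^ (s - 1) = a ^ (s - 1) := by
            rw [← mul_rpow (by norm_num) (by positivity)]
            ring_nf
          have hexp : exp (2 * a) * exp (-(2 * a)) = 1 := by rw [← exp_add]; simp
          have hself : a ^ s = a * a ^ (s - 1) := by rw [rpow_sub_one ha.ne']; field_simp
          rw [hself]
          linear_combination (-a) * hpow - a * (1 / 2 : ℝ) ^ (s - 1) * (2 * a) ^ (s - 1) * hexp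
      _ ≤ _ := by gcongr; exact rpow_sub_one_mul_exp_neg_le_Gamma hs (by linarith)

lemma tendsto_upperGamma_div_Gamma_atTop {a : ℝ} (ha : 0 < a) :
    Tendsto (fun s => upperGamma s a / Gamma s) atTop (𝓝 1) := by
  have hlower : Tendsto (fun s => lowerGamma s a / Gamma s) atTop (𝓝 0) := by
    refine squeeze_zero' ?_ ?_ (tendsto_rpow_div_Gamma_atTop ha)
    · filter_upwards [eventually_gt_atTop 0] with s hs
      exact div_nonneg (lowerGamma_nonneg s a) (Gamma_pos_of_pos hs).le
    · filter_upwards [eventually_ge_atTop 1] with s hs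
      gcongr
      exact lowerGamma_le_rpow hs ha
  have hupper : Tendsto (fun s => 1 - lowerGamma s a / Gamma s) atTop (𝓝 1) := by
    simpa using hlower.const_sub 1
  refine hupper.congr' ?_
  filter_upwards [eventually_gt_atTop 0] with s hs
  rw [eq_div_iff (Gamma_pos_of_pos hs).ne', sub_mul, div_mul_cancel₀ _ (Gamma_pos_of_pos hs).ne',
    ← lowerGamma_add_upperGamma hs ha.le]
  ring

lemma tendsto_tsum_pow_div_factorial_mul {α : Type*} {l : Filter α} {f : ℕ → α → ℝ} {c B : ℝ}
    (a : ℝ) (hf : ∀ k, Tendsto (f k) l (𝓝 c)) (hB : ∀ᶠ e in l, ∀ k, |f k e| ≤ B) :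
    Tendsto (fun e => ∑' k, a ^ k / k ! * f k e) l (𝓝 (exp a * c)) := by
  have hexp : ∑' k : ℕ, a ^ k / k ! * c = exp a * c := by
    rw [tsum_mul_right, exp_eq_exp_ℝ, (NormedSpace.expSeries_div_hasSum_exp a).tsum_eq]
  rw [← hexp]
  refine tendsto_tsum_of_dominated_convergence
    ((summable_pow_div_factorial |a|).mul_right B) (fun k => (hf k).const_mul _) ?_
  filter_upwards [hB] with e he k
  simp only [norm_mul, norm_div, norm_pow, Real.norm_eq_abs, Nat.abs_cast]
  gcongr
  exact he k

/-- The sum is indexed by `k ∈ ℕ`: its term of index `k` is the term `k + 1` of the paper's sum. -/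
theorem limit_eps_to_infty_general (lam x : ℝ) (hlam : 0 < lam) :
    Filter.Tendsto
      (fun eps : ℝ =>
        ∑' k : ℕ, Real.exp (-(((k : ℝ) + 1) * x)) *
          ((Real.exp (-lam) / (1 - Real.exp (-lam))) *
            (Real.exp (lam * Real.exp (-x)) *
                upperGamma (eps * ((k : ℝ) + 1)) (lam * Real.exp (-x)) /
                Real.Gamma (eps * ((k : ℝ) + 1)) - 1)) *
          (Real.exp (-lam) * lam ^ k / (Nat.factorial k : ℝ)))
      Filter.atTop
      (nhds ((Real.exp (-2 * lam) / (1 - Real.exp (-lam))) *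
        Real.exp (lam * Real.exp (-x) - x) * (Real.exp (lam * Real.exp (-x)) - 1))) := by
  set a := lam * exp (-x)
  set C := exp (-lam) / (1 - exp (-lam))
  have ha : 0 < a := by positivity
  set r : ℕ → ℝ → ℝ := fun k eps =>
    C * (exp a * upperGamma (eps * (k + 1)) a / Gamma (eps * (k + 1)) - 1)
  have hr : ∀ k, Tendsto (r k) atTop (𝓝 (C * (exp a - 1))) := fun k => by
    have := (tendsto_upperGamma_div_Gamma_atTop ha).comp
      (tendsto_id.atTop_mul_const (Nat.cast_add_one_pos k))
    simpa [r, mul_div_assoc] using ((this.const_mul (exp a)).sub_const 1).const_mul C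
  have hbound : ∀ᶠ eps in atTop, ∀ k, |r k eps| ≤ |C| * (exp a + 1) := by
    filter_upwards [eventually_gt_atTop 0] with eps heps k
    have hs : 0 < eps * (k + 1) := by positivity
    have hΓ := Gamma_pos_of_pos hs
    have hq₀ := div_nonneg (upperGamma_nonneg (eps * (k + 1)) ha.le) hΓ.le
    have hq₁ := div_le_one_of_le₀ (upperGamma_le_Gamma hs ha.le) hΓ.le
    simp only [r, abs_mul, mul_div_assoc]
    gcongr
    rw [abs_le]
    constructor <;> nlinarith [exp_pos a, one_le_exp ha.le]
  have hsummand : ∀ eps : ℝ, ∀ k : ℕ,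
      exp (-((k + 1) * x)) * (C * (exp a * upperGamma (eps * (k + 1)) a / Gamma (eps * (k + 1))
        - 1)) * (exp (-lam) * lam ^ k / k !) = exp (-x) * exp (-lam) * (a ^ k / k ! * r k eps) := by
    intro eps k
    rw [show -((k + 1) * x) = k * -x + -x by ring, exp_add, exp_nat_mul]
    ring
  simp_rw [hsummand, tsum_mul_left]
  convert (tendsto_tsum_pow_div_factorial_mul a hr hbound).const_mul (exp (-x) * exp (-lam))
    using 2
  rw [show -2 * lam = -lam + -lam by ring, sub_eq_add_neg (a := a), exp_add, exp_add]
  ring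

/-- As ε → ∞, E[e^{−xX*} H(x, εX*)] tends to
(e^{−2λ}/(1−e^{−λ})) e^{λe^{−x}−x} ( e^{λe^{−x}} − 1 ).
(The sum is written with the index shifted so that it runs over k ∈ ℕ,
the term of index k corresponding to the term k+1 of the original sum.) -/
theorem limit_eps_to_infty (lam x : ℝ) (hlam : 0 < lam) (hx : 0 < x) :
    Filter.Tendsto
      (fun eps : ℝ =>
        ∑' k : ℕ, Real.exp (-(((k : ℝ) + 1) * x)) *
          ((Real.exp (-lam) / (1 - Real.exp (-lam))) *
            (Real.exp (lam * Real.exp (-x)) *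
                upperGamma (eps * ((k : ℝ) + 1)) (lam * Real.exp (-x)) /
                Real.Gamma (eps * ((k : ℝ) + 1)) - 1)) *
          (Real.exp (-lam) * lam ^ k / (Nat.factorial k : ℝ)))
      Filter.atTop
      (nhds ((Real.exp (-2 * lam) / (1 - Real.exp (-lam))) *
        Real.exp (lam * Real.exp (-x) - x) * (Real.exp (lam * Real.exp (-x)) - 1))) :=
  limit_eps_to_infty_general lam x hlam
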